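/- Let z₀ ∈ ℂ \ {0} and κ₁ ∈ ℂ with κ₁ ≠ z₀³/3, and set κ₂ = −(z₀⁶ − 15κ₁z₀³ − 45κ₁²)/(45z₀) and κ₃ = −(z₀⁹ − 189κ₁²z₀³ − 189κ₁³)/(189z₀²). Then z₀ is a root of the Adler–Moser polynomial Θ₄(z) with parameters (κ₁,κ₂,κ₃) of multiplicity exactly 3; in particular, the third derivative satisfies Θ₄⁗′(z₀) = Θ₄^{(3)}(z₀) ≠ 0. -/

import Mathlib

/-!
`Θ₄'` and `Θ₄''` are linear in `(κ₂, κ₃)`, and the given `κ₂, κ₃` solve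
`Θ₄'(z₀) = Θ₄''(z₀) = 0`; then `Θ₄(z₀)` vanishes as well. After clearing the denominators the
third derivative collapses to a perfect cube, `z₀² Θ₄'''(z₀) = 350 (z₀³ - 3κ₁)³`, which is
nonzero exactly when `κ₁ ≠ z₀³/3`.
-/

open Complex

/-- The Adler–Moser polynomial
`Θ₄(z) = z¹⁰ − 45κ₁z⁷ + 315κ₂z⁵ − 1575κ₃z³ + 4725κ₁κ₂z² − 4725κ₁³z − 4725κ₂² + 4725κ₁κ₃`
as a function of `z`. -/
noncomputable def theta4 (κ₁ κ₂ κ₃ : ℂ) : ℂ → ℂ := fun z =>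
  z ^ 10 - 45 * κ₁ * z ^ 7 + 315 * κ₂ * z ^ 5 - 1575 * κ₃ * z ^ 3
    + 4725 * κ₁ * κ₂ * z ^ 2 - 4725 * κ₁ ^ 3 * z - 4725 * κ₂ ^ 2 + 4725 * κ₁ * κ₃

open Polynomial

theorem Polynomial.iteratedDeriv_eval {𝕜 : Type*} [NontriviallyNormedField 𝕜] (p : 𝕜[X])
    (n : ℕ) : iteratedDeriv n (fun x => p.eval x) = fun x => (derivative^[n] p).eval x := by
  induction n generalizing p with
  | zero => rfl
  | succ n ih =>
    rw [iteratedDeriv_succ, ih, Function.iterate_succ_apply']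
    ext x
    exact Polynomial.deriv _

noncomputable def theta4Poly (κ₁ κ₂ κ₃ : ℂ) : ℂ[X] :=
  X ^ 10 - C (45 * κ₁) * X ^ 7 + C (315 * κ₂) * X ^ 5 - C (1575 * κ₃) * X ^ 3
    + C (4725 * κ₁ * κ₂) * X ^ 2 - C (4725 * κ₁ ^ 3) * X - C (4725 * κ₂ ^ 2) + C (4725 * κ₁ * κ₃)

theorem theta4_eq_eval (κ₁ κ₂ κ₃ : ℂ) :
    theta4 κ₁ κ₂ κ₃ = fun z => (theta4Poly κ₁ κ₂ κ₃).eval z := by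
  ext z
  simp [theta4, theta4Poly]

theorem iteratedDeriv_theta4 (κ₁ κ₂ κ₃ : ℂ) (n : ℕ) :
    iteratedDeriv n (theta4 κ₁ κ₂ κ₃) =
      fun z => (derivative^[n] (theta4Poly κ₁ κ₂ κ₃)).eval z := by
  rw [theta4_eq_eval, Polynomial.iteratedDeriv_eval]

theorem iteratedDeriv_one_theta4 (κ₁ κ₂ κ₃ z : ℂ) :
    iteratedDeriv 1 (theta4 κ₁ κ₂ κ₃) z =
      10 * z ^ 9 - 315 * κ₁ * z ^ 6 + 1575 * κ₂ * z ^ 4 - 4725 * κ₃ * z ^ 2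
        + 9450 * κ₁ * κ₂ * z - 4725 * κ₁ ^ 3 := by
  simp only [iteratedDeriv_theta4, theta4Poly, Function.iterate_one, derivative_add,
    derivative_sub, derivative_C_mul, derivative_X_pow_succ, pow_one, derivative_C, derivative_X,
    eval_add, eval_sub, eval_mul, eval_C, eval_pow, eval_X, eval_zero, eval_one]
  ring

theorem iteratedDeriv_two_theta4 (κ₁ κ₂ κ₃ z : ℂ) :
    iteratedDeriv 2 (theta4 κ₁ κ₂ κ₃) z =
      90 * z ^ 8 - 1890 * κ₁ * z ^ 5 + 6300 * κ₂ * z ^ 3 - 9450 * κ₃ * z + 9450 * κ₁ * κ₂ := by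
  simp only [iteratedDeriv_theta4, theta4Poly, Function.iterate_succ_apply',
    Function.iterate_zero_apply, derivative_add, derivative_sub, derivative_C_mul,
    derivative_X_pow_succ, pow_one, derivative_C, derivative_X, derivative_zero, derivative_one,
    eval_add, eval_sub, eval_mul, eval_C, eval_pow, eval_X, eval_zero, eval_one]
  ring

theorem iteratedDeriv_three_theta4 (κ₁ κ₂ κ₃ z : ℂ) :
    iteratedDeriv 3 (theta4 κ₁ κ₂ κ₃) z =
      720 * z ^ 7 - 9450 * κ₁ * z ^ 4 + 18900 * κ₂ * z ^ 2 - 9450 * κ₃ := by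
  simp only [iteratedDeriv_theta4, theta4Poly, Function.iterate_succ_apply',
    Function.iterate_zero_apply, derivative_add, derivative_sub, derivative_C_mul,
    derivative_X_pow_succ, pow_one, derivative_C, derivative_X, derivative_zero, derivative_one,
    eval_add, eval_sub, eval_mul, eval_C, eval_pow, eval_X, eval_zero, eval_one]
  ring

section TripleRoot

variable {z₀ κ₁ κ₂ κ₃ : ℂ}
  (h₂ : 45 * z₀ * κ₂ = -(z₀ ^ 6 - 15 * κ₁ * z₀ ^ 3 - 45 * κ₁ ^ 2))
  (h₃ : 189 * z₀ ^ 2 * κ₃ = -(z₀ ^ 9 - 189 * κ₁ ^ 2 * z₀ ^ 3 - 189 * κ₁ ^ 3))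
include h₂ h₃

theorem sq_mul_iteratedDeriv_theta4_eq_zero {k : ℕ} (hk : k < 3) :
    z₀ ^ 2 * iteratedDeriv k (theta4 κ₁ κ₂ κ₃) z₀ = 0 := by
  interval_cases k
  · rw [iteratedDeriv_zero, theta4]
    linear_combination (28 / 3 * z₀ ^ 6 + 70 * κ₁ * z₀ ^ 3 - 105 * κ₁ ^ 2 - 105 * z₀ * κ₂) * h₂
      + (25 * κ₁ - 25 / 3 * z₀ ^ 3) * h₃
  · rw [iteratedDeriv_one_theta4]
    linear_combination z₀ ^ 2 * ((35 * z₀ ^ 3 + 210 * κ₁) * h₂ - 25 * h₃)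
  · rw [iteratedDeriv_two_theta4]
    linear_combination z₀ * ((140 * z₀ ^ 3 + 210 * κ₁) * h₂ - 50 * h₃)

theorem sq_mul_iteratedDeriv_three_theta4 :
    z₀ ^ 2 * iteratedDeriv 3 (theta4 κ₁ κ₂ κ₃) z₀ = 350 * (z₀ ^ 3 - 3 * κ₁) ^ 3 := by
  rw [iteratedDeriv_three_theta4]
  linear_combination 420 * z₀ ^ 3 * h₂ - 50 * h₃

end TripleRoot

/-- **For `z₀ ≠ 0`, `κ₁ ≠ z₀³/3`, and the choice of `κ₂, κ₃` of Eq. (2.21), `z₀` is a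
root of multiplicity exactly 3 of `Θ₄`:** the derivatives of order `< 3` vanish at `z₀`
and the third derivative `Θ₄^{(3)}(z₀) ≠ 0`. -/
theorem theta4_exact_triple_root (z₀ : ℂ) (hz₀ : z₀ ≠ 0) (κ₁ κ₂ κ₃ : ℂ)
    (hκ₁ : κ₁ ≠ z₀ ^ 3 / 3)
    (hκ₂ : κ₂ = -(z₀ ^ 6 - 15 * κ₁ * z₀ ^ 3 - 45 * κ₁ ^ 2) / (45 * z₀))
    (hκ₃ : κ₃ = -(z₀ ^ 9 - 189 * κ₁ ^ 2 * z₀ ^ 3 - 189 * κ₁ ^ 3) / (189 * z₀ ^ 2)) :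
    (∀ k < 3, iteratedDeriv k (theta4 κ₁ κ₂ κ₃) z₀ = 0) ∧
      iteratedDeriv 3 (theta4 κ₁ κ₂ κ₃) z₀ ≠ 0 := by
  have h₂ : 45 * z₀ * κ₂ = -(z₀ ^ 6 - 15 * κ₁ * z₀ ^ 3 - 45 * κ₁ ^ 2) := by
    rw [hκ₂]; field_simp
  have h₃ : 189 * z₀ ^ 2 * κ₃ = -(z₀ ^ 9 - 189 * κ₁ ^ 2 * z₀ ^ 3 - 189 * κ₁ ^ 3) := by
    rw [hκ₃]; field_simp
  have hz₀sq : z₀ ^ 2 ≠ 0 := pow_ne_zero 2 hz₀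
  refine ⟨fun k hk => ?_, fun h => hκ₁ ?_⟩
  · exact (mul_eq_zero.mp (sq_mul_iteratedDeriv_theta4_eq_zero h₂ h₃ hk)).resolve_left hz₀sq
  · have hcube := sq_mul_iteratedDeriv_three_theta4 h₂ h₃
    rw [h, mul_zero, eq_comm, mul_eq_zero, pow_eq_zero_iff three_ne_zero] at hcube
    linear_combination -(hcube.resolve_left (by norm_num)) / 3
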